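/- arXiv:1403.4741 — 7 statements merged into one kernel-verified Lean document; each statement's English description precedes it below -/
import Mathlib

section
/- For every positive integer n, there exists a subset S of the cyclic group ℤ/nℤ with 0 ∉ S, S = −S, |S| ≤ 2⌈√n⌉, and such that every element of ℤ/nℤ is a sum of at most two elements of S. (Explicitly, with K = ⌈√n⌉ and M = ⌊K/2⌋, the set {±1, ±2, …, ±M, ±K, ±2K, …, ±MK} works.) -/
/-- Every integer `t` with `|t| ≤ M(K+1)` can be written as `qK + r` with `|q|, |r| ≤ M`,
provided `2M ≤ K ≤ 2M+1`. -/
lemma zmod_diam2_key (K M t : ℤ) (hK : 0 < K) (h1 : K ≤ 2*M+1) (h2 : 2*M ≤ K)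
    (ht : |t| ≤ M*(K+1)) : ∃ q r : ℤ, |q| ≤ M ∧ |r| ≤ M ∧ t = q*K + r := by
  have hM : 0 ≤ M := by omega
  rw [abs_le] at ht
  by_cases hE : t = M*(K+1)
  · exact ⟨M, M, by rw [abs_of_nonneg hM], by rw [abs_of_nonneg hM], by rw [hE]; ring⟩
  · set q := (t + M) / K with hq
    set rem := (t + M) % K with hr
    have he : K * q + rem = t + M := Int.mul_ediv_add_emod (t+M) K
    have h0 : 0 ≤ rem := Int.emod_nonneg _ hK.ne'
    have h1' : rem < K := Int.emod_lt_of_pos _ hK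
    have hq1 : q ≤ M := by
      by_contra hc
      push_neg at hc
      have hm : K * (M+1) ≤ K * q := mul_le_mul_of_nonneg_left (by omega) hK.le
      have : t = M*(K+1) := by nlinarith [ht.2]
      exact hE this
    have hq2 : -M ≤ q := by
      by_contra hc
      push_neg at hc
      have hm : K * q ≤ K * (-M-1) := mul_le_mul_of_nonneg_left (by omega) hK.le
      nlinarith [ht.1]
    exact ⟨q, rem - M, abs_le.2 ⟨hq2, hq1⟩, abs_le.2 ⟨by omega, by omega⟩, by linarith⟩

/-- The cyclic group `ℤ/nℤ` has a diameter-2 Cayley graph with a generating set of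
size at most `2⌈√n⌉`: there is a symmetric subset `S` of `ℤ/nℤ` avoiding `0`, of
cardinality at most `2⌈√n⌉`, such that every element of `ℤ/nℤ` is a sum of at most
two elements of `S`. -/
theorem zmod_diameter_two_generating_set (n : ℕ) (hn : 0 < n) :
    ∃ S : Finset (ZMod n),
      (0 : ZMod n) ∉ S ∧
      (∀ s ∈ S, -s ∈ S) ∧
      S.card ≤ 2 * ⌈Real.sqrt n⌉₊ ∧
      (∀ g : ZMod n, g = 0 ∨ g ∈ S ∨ ∃ a ∈ S, ∃ b ∈ S, g = a + b) := by
  haveI : NeZero n := ⟨hn.ne'⟩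
  set K := ⌈Real.sqrt n⌉₊ with hKdef
  have hK1 : 0 < K := Nat.ceil_pos.mpr (Real.sqrt_pos.mpr (by exact_mod_cast hn))
  have hnK : n ≤ K * K := by
    have h1 : Real.sqrt n ≤ K := Nat.le_ceil _
    have h2 : (n : ℝ) ≤ (K : ℝ) * K := by
      nlinarith [Real.sq_sqrt (show (0:ℝ) ≤ n by positivity), Real.sqrt_nonneg (n:ℝ)]
    exact_mod_cast h2
  set M := K / 2 with hMdef
  set T : Finset ℤ := (Finset.Icc (-(M:ℤ)) (M:ℤ)).erase 0 with hTdef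
  have hT : ∀ i : ℤ, i ∈ T ↔ (i ≠ 0 ∧ -(M:ℤ) ≤ i ∧ i ≤ M) := by
    intro i
    simp [hTdef, Finset.mem_erase, Finset.mem_Icc]
  have hTcard : T.card = 2*M := by
    rw [hTdef, Finset.card_erase_of_mem (by simp [Finset.mem_Icc]), Int.card_Icc]
    omega
  set f : ℤ → ZMod n := fun i => (i : ZMod n) with hf
  set f2 : ℤ → ZMod n := fun i => ((i * K : ℤ) : ZMod n) with hf2
  set S : Finset (ZMod n) := ((T.image f) ∪ (T.image f2)).erase 0 with hSdef
  refine ⟨S, Finset.notMem_erase _ _, ?_, ?_, ?_⟩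
  · -- symmetry
    intro s hs
    rw [hSdef, Finset.mem_erase, Finset.mem_union] at hs ⊢
    refine ⟨fun h => hs.1 (neg_eq_zero.mp h), ?_⟩
    rcases hs.2 with h | h
    · left
      rw [Finset.mem_image] at h ⊢
      obtain ⟨i, hi, rfl⟩ := h
      refine ⟨-i, ?_, by simp [hf]⟩
      rw [hT] at hi ⊢
      omega
    · right
      rw [Finset.mem_image] at h ⊢
      obtain ⟨i, hi, rfl⟩ := h
      refine ⟨-i, ?_, by simp only [hf2]; push_cast; ring⟩
      rw [hT] at hi ⊢
      omega
  · -- cardinality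
    have h1 : (T.image f).card ≤ 2*M := hTcard ▸ Finset.card_image_le
    have h2 : (T.image f2).card ≤ 2*M := hTcard ▸ Finset.card_image_le
    have h3 : S.card ≤ (T.image f).card + (T.image f2).card :=
      le_trans (Finset.card_erase_le) (Finset.card_union_le _ _)
    omega
  · -- coverage
    intro g
    have hval : g.val < n := ZMod.val_lt g
    have hgv : ((g.val : ℤ) : ZMod n) = g := by
      push_cast
      exact ZMod.natCast_rightInverse g
    set v : ℤ := (g.val : ℤ) with hv
    have hv0 : 0 ≤ v := Int.natCast_nonneg _
    have hvn : v < n := by rw [hv]; exact_mod_cast hval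
    have hKM1 : (K:ℤ) ≤ 2*(M:ℤ)+1 := by omega
    have hKM2 : 2*(M:ℤ) ≤ (K:ℤ) := by omega
    have hcov : (n:ℤ) - 1 ≤ 2*(M:ℤ)*((K:ℤ)+1) := by
      have ha : ((K:ℤ)-1) * ((K:ℤ)+1) ≤ 2*(M:ℤ)*((K:ℤ)+1) :=
        mul_le_mul_of_nonneg_right (by omega) (by omega)
      have hb : (n:ℤ) ≤ (K:ℤ)*(K:ℤ) := by exact_mod_cast hnK
      nlinarith
    obtain ⟨t, htb, htg⟩ : ∃ t : ℤ, |t| ≤ (M:ℤ)*((K:ℤ)+1) ∧ ((t : ℤ) : ZMod n) = g := by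
      by_cases hvt : v ≤ (M:ℤ)*((K:ℤ)+1)
      · refine ⟨v, abs_le.2 ⟨by nlinarith, hvt⟩, hgv⟩
      · push_neg at hvt
        refine ⟨v - n, abs_le.2 ⟨by linarith, by linarith⟩, ?_⟩
        rw [Int.cast_sub, hgv]
        simp
    obtain ⟨q, r, hq, hr, hqr⟩ := zmod_diam2_key (K:ℤ) (M:ℤ) t (by exact_mod_cast hK1)
      hKM1 hKM2 htb
    set a : ZMod n := ((q * K : ℤ) : ZMod n) with haDef
    set b : ZMod n := ((r : ℤ) : ZMod n) with hbDef
    have hab : g = a + b := by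
      rw [← htg, hqr, haDef, hbDef]
      exact Int.cast_add _ _
    rw [abs_le] at hq hr
    have haS : a ≠ 0 → a ∈ S := by
      intro ha
      rw [hSdef, Finset.mem_erase, Finset.mem_union]
      refine ⟨ha, Or.inr ?_⟩
      rw [Finset.mem_image]
      refine ⟨q, (hT q).2 ⟨?_, hq.1, hq.2⟩, rfl⟩
      rintro rfl
      exact ha (by simp [haDef])
    have hbS : b ≠ 0 → b ∈ S := by
      intro hb
      rw [hSdef, Finset.mem_erase, Finset.mem_union]
      refine ⟨hb, Or.inl ?_⟩
      rw [Finset.mem_image]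
      refine ⟨r, (hT r).2 ⟨?_, hr.1, hr.2⟩, rfl⟩
      rintro rfl
      exact hb (by simp [hbDef])
    by_cases ha : a = 0 <;> by_cases hb : b = 0
    · left; rw [hab, ha, hb, add_zero]
    · right; left; rw [hab, ha, zero_add]; exact hbS hb
    · right; left; rw [hab, hb, add_zero]; exact haS ha
    · exact Or.inr (Or.inr ⟨a, haS ha, b, hbS hb, hab⟩)
end

section
/- Let H be a finite abelian group of order n and let G = H ⋊ C₂ be the generalised dihedral group of H, i.e. the semidirect product of H with the two-element group acting on H by the inversion automorphism (so |G| = 2n). Suppose S ⊆ G satisfies 1 ∉ S, S = S⁻¹, and every element of G is a product of at most two elements of S. Then |S| ≥ 2√n − 1. -/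
/-!
Split `S` into its rotations `(x, 1)` and reflections `(y, -1)`, and let `R`, `F ⊆ H` be the
sets of their `H`-components. A reflection `(h, -1)` that is not in `S` is a product of a
rotation and a reflection of `S`, in one order or the other; as `S` is inverse-closed and `H`
is abelian, both orders give `h ∈ R * F`. Hence `H = F ∪ R * F`, so `n ≤ |F| (|R| + 1)`, and
AM-GM gives `2 √n ≤ |F| + |R| + 1 ≤ |S| + 1`.
-/

/-- The action of `ℤˣ = {±1}` on a commutative group `H` in which `-1` acts by the
inversion automorphism. -/
def invAut (H : Type*) [CommGroup H] : ℤˣ →* MulAut H where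
  toFun u := if u = 1 then 1 else MulEquiv.inv H
  map_one' := by simp
  map_mul' a b := by
    rcases Int.units_eq_one_or a with ha | ha <;> rcases Int.units_eq_one_or b with hb | hb <;>
      subst ha <;> subst hb <;> ext h <;> simp [MulEquiv.inv] <;> exact (inv_inv h).symm

open Finset SemidirectProduct
open scoped Pointwise

section GeneralisedDihedral

variable {H : Type*} [CommGroup H]

@[simp]
lemma invAut_one_apply (x : H) : invAut H 1 x = x := rfl

@[simp]
lemma invAut_neg_one_apply (x : H) : invAut H (-1) x = x⁻¹ := by
  simp [invAut]

lemma right_eq_one_or_neg_one (g : H ⋊[invAut H] ℤˣ) : g.right = 1 ∨ g.right = -1 :=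
  Int.units_eq_one_or g.right

lemma mk_neg_one_ne_one (h : H) : (⟨h, -1⟩ : H ⋊[invAut H] ℤˣ) ≠ 1 := fun heq ↦
  (by decide : (-1 : ℤˣ) ≠ 1) (congrArg right heq)

variable [DecidableEq H]

def fibreLeft (S : Finset (H ⋊[invAut H] ℤˣ)) (u : ℤˣ) : Finset H :=
  (S.filter (·.right = u)).image left

lemma mem_fibreLeft {S : Finset (H ⋊[invAut H] ℤˣ)} {u : ℤˣ} {h : H} :
    h ∈ fibreLeft S u ↔ (⟨h, u⟩ : H ⋊[invAut H] ℤˣ) ∈ S := by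
  simp only [fibreLeft, mem_image, mem_filter]
  constructor
  · rintro ⟨g, ⟨hgS, rfl⟩, rfl⟩
    exact hgS
  · exact fun hS ↦ ⟨_, ⟨hS, rfl⟩, rfl⟩

lemma card_fibreLeft_one_add_card_fibreLeft_neg_one_le (S : Finset (H ⋊[invAut H] ℤˣ)) :
    #(fibreLeft S 1) + #(fibreLeft S (-1)) ≤ #S := by
  have hneg : S.filter (·.right = -1) = S.filter (¬ ·.right = 1) := filter_congr fun g _ ↦ by
    rcases right_eq_one_or_neg_one g with hg | hg <;> simp [hg]
  have hsplit : #(S.filter (·.right = 1)) + #(S.filter (·.right = -1)) = #S := by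
    rw [hneg, card_filter_add_card_filter_not]
  exact hsplit ▸ add_le_add card_image_le card_image_le

lemma mem_fibreLeft_mul_of_mul_eq {S : Finset (H ⋊[invAut H] ℤˣ)}
    (hinv : ∀ s ∈ S, s⁻¹ ∈ S) {a b : H ⋊[invAut H] ℤˣ} (ha : a ∈ S) (hb : b ∈ S) {h : H}
    (hab : (⟨h, -1⟩ : H ⋊[invAut H] ℤˣ) = a * b) :
    h ∈ fibreLeft S 1 * fibreLeft S (-1) := by
  have hl : h = a.left * invAut H a.right b.left := congrArg left hab
  have hr : -1 = a.right * b.right := congrArg right hab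
  rcases right_eq_one_or_neg_one a with ha1 | ha1
  · have hb1 : b.right = -1 := by simpa [ha1] using hr.symm
    refine mem_mul.2 ⟨a.left, mem_fibreLeft.2 ?_, b.left, mem_fibreLeft.2 ?_, ?_⟩
    · rwa [← ha1]
    · rwa [← hb1]
    · simp [hl, ha1]
  · have hb1 : b.right = 1 := by
      rcases right_eq_one_or_neg_one b with hb1 | hb1
      · exact hb1
      · simp [ha1, hb1] at hr
    -- `b⁻¹ = (b.left⁻¹, 1)` is a rotation of `S`, and `h = b.left⁻¹ * a.left` by commutativity.
    refine mem_mul.2 ⟨b.left⁻¹, mem_fibreLeft.2 ?_, a.left, mem_fibreLeft.2 ?_, ?_⟩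
    · convert hinv b hb using 1
      ext <;> simp [hb1]
    · rwa [← ha1]
    · simp [hl, ha1, mul_comm]

lemma card_le_card_fibreLeft_mul [Fintype H] {S : Finset (H ⋊[invAut H] ℤˣ)}
    (hinv : ∀ s ∈ S, s⁻¹ ∈ S)
    (hcov : ∀ h : H, (⟨h, -1⟩ : H ⋊[invAut H] ℤˣ) ∈ S ∨ ∃ a ∈ S, ∃ b ∈ S, ⟨h, -1⟩ = a * b) :
    Fintype.card H ≤ #(fibreLeft S (-1)) * (#(fibreLeft S 1) + 1) := by
  have hcover : (univ : Finset H) ⊆ fibreLeft S (-1) ∪ fibreLeft S 1 * fibreLeft S (-1) := by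
    intro h _
    rcases hcov h with hS | ⟨a, ha, b, hb, hab⟩
    · exact mem_union_left _ (mem_fibreLeft.2 hS)
    · exact mem_union_right _ (mem_fibreLeft_mul_of_mul_eq hinv ha hb hab)
  calc Fintype.card H
      ≤ #(fibreLeft S (-1)) + #(fibreLeft S 1 * fibreLeft S (-1)) :=
        (card_le_card hcover).trans (card_union_le _ _)
    _ ≤ #(fibreLeft S (-1)) + #(fibreLeft S 1) * #(fibreLeft S (-1)) := by
        gcongr; exact card_mul_le
    _ = #(fibreLeft S (-1)) * (#(fibreLeft S 1) + 1) := by ring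

end GeneralisedDihedral

theorem generalised_dihedral_diameter_two_degree_bound_general
    (H : Type*) [CommGroup H] [Fintype H] (n : ℕ) (hn : Fintype.card H = n)
    (S : Finset (H ⋊[invAut H] ℤˣ))
    (hinv : ∀ s ∈ S, s⁻¹ ∈ S)
    (hcov : ∀ g : H ⋊[invAut H] ℤˣ, g = 1 ∨ g ∈ S ∨ ∃ a ∈ S, ∃ b ∈ S, g = a * b) :
    (S.card : ℝ) ≥ 2 * Real.sqrt n - 1 := by
  classical
  subst hn
  have hcard : (Fintype.card H : ℝ) ≤ #(fibreLeft S (-1)) * (#(fibreLeft S 1) + 1) := by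
    exact_mod_cast card_le_card_fibreLeft_mul hinv
      fun h ↦ (hcov ⟨h, -1⟩).resolve_left (mk_neg_one_ne_one h)
  have hamgm : 2 * Real.sqrt (Fintype.card H) ≤ #(fibreLeft S (-1)) + (#(fibreLeft S 1) + 1) :=
    two_mul_le_add_of_sq_le_mul (by positivity) (by positivity)
      (by rw [Real.sq_sqrt (by positivity)]; exact hcard)
  have hsplit : (#(fibreLeft S 1) + #(fibreLeft S (-1)) : ℝ) ≤ #S := by
    exact_mod_cast card_fibreLeft_one_add_card_fibreLeft_neg_one_le S
  linarith

/-- **Lemma 2 (upper bound).** Let `G = H ⋊ C₂` be the generalised dihedral group of a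
finite abelian group `H` of order `n`, and let `S` be an inverse-closed subset of `G` not
containing the identity such that every element of `G` is a product of at most two
elements of `S` (i.e. `Cay(G,S)` has diameter at most 2). Then the degree `d = |S|`
satisfies `d ≥ 2√n - 1`. -/
theorem generalised_dihedral_diameter_two_degree_bound
    (H : Type*) [CommGroup H] [Fintype H] (n : ℕ) (hn : Fintype.card H = n)
    (S : Finset (H ⋊[invAut H] ℤˣ))
    (h1 : (1 : H ⋊[invAut H] ℤˣ) ∉ S)
    (hinv : ∀ s ∈ S, s⁻¹ ∈ S)
    (hcov : ∀ g : H ⋊[invAut H] ℤˣ, g = 1 ∨ g ∈ S ∨ ∃ a ∈ S, ∃ b ∈ S, g = a * b) :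
    (S.card : ℝ) ≥ 2 * Real.sqrt n - 1 :=
  generalised_dihedral_diameter_two_degree_bound_general H n hn S hinv hcov
end

section
/- Let H be a finite abelian group and let G = H ⋊ C₂ be the generalised dihedral group of H. Suppose S ⊆ G satisfies 1 ∉ S, S = S⁻¹, and every element of G is a product of at most two elements of S, and let d = |S|. Then |G| ≤ (d + 1)²/2. -/
/-!
Split `S` into its rotations `A` (elements of `H × {1}`) and reflections `B` (elements of
`H × {-1}`). A reflection `t` is a product of at most two elements of `S`, so `t ∈ B`,
`t = r * t'` or `t = t' * r = r⁻¹ * t'` with `r ∈ A`, `t' ∈ B`; as `A` is inverse-closed,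
every reflection lies in `(A ∪ {1}) * B`. So `|H| ≤ (|A| + 1) |B|`, and AM-GM
with `|A| + |B| = d` gives `|G| = 2 |H| ≤ (d + 1)² / 2`.
-/

open Finset

namespace GeneralisedDihedral

variable {H : Type*} [CommGroup H]

@[simp]
lemma invAut_neg_one_apply (h : H) : invAut H (-1) h = h⁻¹ :=
  rfl

lemma reflection_mul_rotation {t r : H ⋊[invAut H] ℤˣ} (ht : t.right = -1) (hr : r.right = 1) :
    t * r = r⁻¹ * t := by
  ext <;> simp [ht, hr, mul_comm]

variable [DecidableEq H]

lemma mem_rotations_mul_reflections {S : Finset (H ⋊[invAut H] ℤˣ)}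
    (hinv : ∀ s ∈ S, s⁻¹ ∈ S)
    (hcov : ∀ g : H ⋊[invAut H] ℤˣ, g = 1 ∨ g ∈ S ∨ ∃ a ∈ S, ∃ b ∈ S, g = a * b)
    {g : H ⋊[invAut H] ℤˣ} (hg : g.right = -1) :
    g ∈ image (fun p ↦ p.1 * p.2)
      (insert 1 (S.filter (·.right = 1)) ×ˢ S.filter (·.right ≠ 1)) := by
  simp only [mem_image, mem_product, mem_insert, mem_filter, Prod.exists]
  rcases hcov g with rfl | hgS | ⟨x, hx, y, hy, rfl⟩
  · simp at hg
  · exact ⟨1, g, ⟨.inl rfl, hgS, by simp [hg]⟩, one_mul g⟩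
  · rcases Int.units_eq_one_or x.right with hx1 | hx1 <;>
      rcases Int.units_eq_one_or y.right with hy1 | hy1 <;>
      simp only [SemidirectProduct.mul_right, hx1, hy1] at hg
    · exact absurd hg (by decide)
    · exact ⟨x, y, ⟨.inr ⟨hx, hx1⟩, hy, by simp [hy1]⟩, rfl⟩
    · exact ⟨y⁻¹, x, ⟨.inr ⟨hinv y hy, by simp [hy1]⟩, hx, by simp [hx1]⟩,
        (reflection_mul_rotation hx1 hy1).symm⟩
    · exact absurd hg (by decide)

variable [Fintype H]

lemma card_le_rotations_succ_mul_reflections {S : Finset (H ⋊[invAut H] ℤˣ)}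
    (hinv : ∀ s ∈ S, s⁻¹ ∈ S)
    (hcov : ∀ g : H ⋊[invAut H] ℤˣ, g = 1 ∨ g ∈ S ∨ ∃ a ∈ S, ∃ b ∈ S, g = a * b) :
    Fintype.card H ≤ (#(S.filter (·.right = 1)) + 1) * #(S.filter (·.right ≠ 1)) := by
  let reflection : H → H ⋊[invAut H] ℤˣ := fun h ↦ ⟨h, -1⟩
  have hinj : Function.Injective reflection := fun _ _ h ↦ congrArg SemidirectProduct.left h
  calc Fintype.card H
      = #(univ.image reflection) := (card_image_of_injective _ hinj).symm
    _ ≤ #(image (fun p ↦ p.1 * p.2)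
          (insert 1 (S.filter (·.right = 1)) ×ˢ S.filter (·.right ≠ 1))) :=
        card_le_card fun g hg ↦ by
          obtain ⟨h, -, rfl⟩ := mem_image.1 hg
          exact mem_rotations_mul_reflections hinv hcov rfl
    _ ≤ #(insert 1 (S.filter (·.right = 1))) * #(S.filter (·.right ≠ 1)) :=
        card_image_le.trans (card_product _ _).le
    _ ≤ (#(S.filter (·.right = 1)) + 1) * #(S.filter (·.right ≠ 1)) :=
        Nat.mul_le_mul_right _ (card_insert_le _ _)

end GeneralisedDihedral

theorem generalised_dihedral_order_bound_general
    (H : Type*) [CommGroup H] [Fintype H]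
    (S : Finset (H ⋊[invAut H] ℤˣ))
    (hinv : ∀ s ∈ S, s⁻¹ ∈ S)
    (hcov : ∀ g : H ⋊[invAut H] ℤˣ, g = 1 ∨ g ∈ S ∨ ∃ a ∈ S, ∃ b ∈ S, g = a * b)
    (d : ℕ) (hd : d = S.card) :
    (Nat.card (H ⋊[invAut H] ℤˣ) : ℝ) ≤ ((d : ℝ) + 1) ^ 2 / 2 := by
  classical
  set a := #(S.filter (·.right = 1))
  set b := #(S.filter (·.right ≠ 1))
  have hcard : Nat.card (H ⋊[invAut H] ℤˣ) = 2 * Fintype.card H := by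
    simp [SemidirectProduct.card, mul_comm]
  have hab : (a : ℝ) + b = d := by
    rw [hd]
    exact_mod_cast card_filter_add_card_filter_not _
  have hH : (Fintype.card H : ℝ) ≤ (a + 1) * b := by
    exact_mod_cast GeneralisedDihedral.card_le_rotations_succ_mul_reflections hinv hcov
  rw [hcard, ← hab]
  push_cast
  nlinarith [sq_nonneg ((a : ℝ) + 1 - b)]

/-- **Upper bound, order form.** Let `G = H ⋊ C₂` be the generalised dihedral group of a
finite abelian group `H`, and let `S ⊆ G` be inverse-closed, avoid the identity, and be
such that every element of `G` is a product of at most two elements of `S` (so that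
`Cay(G,S)` has diameter at most 2 and degree `d = |S|`). Then `|G| ≤ (d+1)²/2`. -/
theorem generalised_dihedral_order_bound
    (H : Type*) [CommGroup H] [Fintype H]
    (S : Finset (H ⋊[invAut H] ℤˣ))
    (h1 : (1 : H ⋊[invAut H] ℤˣ) ∉ S)
    (hinv : ∀ s ∈ S, s⁻¹ ∈ S)
    (hcov : ∀ g : H ⋊[invAut H] ℤˣ, g = 1 ∨ g ∈ S ∨ ∃ a ∈ S, ∃ b ∈ S, g = a * b)
    (d : ℕ) (hd : d = S.card) :
    (Nat.card (H ⋊[invAut H] ℤˣ) : ℝ) ≤ ((d : ℝ) + 1) ^ 2 / 2 :=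
  generalised_dihedral_order_bound_general H S hinv hcov d hd
end

section
/- Let n be a positive integer and let G be the dihedral group of order 2n. Suppose S ⊆ G satisfies 1 ∉ S, S = S⁻¹, and every element of G is a product of at most two elements of S, with d = |S|. Then 2n ≤ (d + 1)²/2, i.e. |S| ≥ 2√n − 1. -/
/-!
Write `A` and `B` for the sets of indices of the rotations and of the reflections in `S`, so
`|A| + |B| = d`. A reflection is a product of two elements of `S` only if exactly one factor is
a rotation, and since `S = S⁻¹` we may put the rotation on the right: every reflection `sr k`
has `k ∈ B + (A ∪ {0})` in `ZMod n`. Hence `n ≤ |B| (|A| + 1) ≤ ((d + 1) / 2)²` by AM-GM.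
-/

open Finset Pointwise

namespace DihedralGroup

variable {n : ℕ}

def rotationIndices (S : Finset (DihedralGroup n)) : Finset (ZMod n) :=
  (S.map equivSum.toEmbedding).toLeft

def reflectionIndices (S : Finset (DihedralGroup n)) : Finset (ZMod n) :=
  (S.map equivSum.toEmbedding).toRight

@[simp]
lemma mem_rotationIndices {S : Finset (DihedralGroup n)} {i : ZMod n} :
    i ∈ rotationIndices S ↔ r i ∈ S := by
  simp [rotationIndices, mem_map_equiv]

@[simp]
lemma mem_reflectionIndices {S : Finset (DihedralGroup n)} {i : ZMod n} :
    i ∈ reflectionIndices S ↔ sr i ∈ S := by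
  simp [reflectionIndices, mem_map_equiv]

lemma card_rotationIndices_add_card_reflectionIndices (S : Finset (DihedralGroup n)) :
    #(rotationIndices S) + #(reflectionIndices S) = #S := by
  rw [rotationIndices, reflectionIndices, card_toLeft_add_card_toRight, card_map]

lemma neg_mem_rotationIndices {S : Finset (DihedralGroup n)} (hinv : ∀ s ∈ S, s⁻¹ ∈ S)
    {i : ZMod n} (hi : i ∈ rotationIndices S) : -i ∈ rotationIndices S :=
  mem_rotationIndices.2 (inv_r i ▸ hinv _ (mem_rotationIndices.1 hi))

/-- Since `r i * sr j = sr j * r (-i)` and `S` is inverse-closed, a rotation of `S` can always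
be moved to the right of the reflection. -/
lemma mem_reflectionIndices_add_of_sr_eq_mul {S : Finset (DihedralGroup n)}
    (hinv : ∀ s ∈ S, s⁻¹ ∈ S) {k : ZMod n}
    (hk : sr k ∈ S ∨ ∃ a ∈ S, ∃ b ∈ S, sr k = a * b) :
    k ∈ reflectionIndices S + insert 0 (rotationIndices S) := by
  rcases hk with hk | ⟨a, ha, b, hb, hab⟩
  · simpa using add_mem_add (mem_reflectionIndices.2 hk) (mem_insert_self 0 (rotationIndices S))
  rcases a with i | i <;> rcases b with j | j
  · simp [r_mul_r] at hab
  · rw [r_mul_sr, sr.injEq] at hab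
    have hi := neg_mem_rotationIndices hinv (mem_rotationIndices.2 ha)
    simpa [hab, sub_eq_add_neg] using
      add_mem_add (mem_reflectionIndices.2 hb) (mem_insert_of_mem hi)
  · rw [sr_mul_r, sr.injEq] at hab
    simpa [hab] using
      add_mem_add (mem_reflectionIndices.2 ha) (mem_insert_of_mem (mem_rotationIndices.2 hb))
  · simp [sr_mul_sr] at hab

lemma le_card_reflectionIndices_mul [NeZero n] {S : Finset (DihedralGroup n)}
    (hinv : ∀ s ∈ S, s⁻¹ ∈ S) (hcov : ∀ k : ZMod n, sr k ∈ S ∨ ∃ a ∈ S, ∃ b ∈ S, sr k = a * b) :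
    n ≤ #(reflectionIndices S) * (#(rotationIndices S) + 1) :=
  calc n = #(univ : Finset (ZMod n)) := (ZMod.card n).symm
    _ ≤ #(reflectionIndices S + insert 0 (rotationIndices S)) :=
      card_le_card fun k _ ↦ mem_reflectionIndices_add_of_sr_eq_mul hinv (hcov k)
    _ ≤ #(reflectionIndices S) * #(insert 0 (rotationIndices S)) := card_add_le
    _ ≤ #(reflectionIndices S) * (#(rotationIndices S) + 1) :=
      Nat.mul_le_mul_left _ (card_insert_le _ _)

end DihedralGroup

theorem dihedral_diameter_two_upper_bound_general (n : ℕ) (hn : 0 < n)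
    (S : Finset (DihedralGroup n))
    (hinv : ∀ s ∈ S, s⁻¹ ∈ S)
    (hcov : ∀ g : DihedralGroup n, g = 1 ∨ g ∈ S ∨ ∃ a ∈ S, ∃ b ∈ S, g = a * b)
    (d : ℕ) (hd : d = S.card) :
    (2 * n : ℝ) ≤ ((d : ℝ) + 1) ^ 2 / 2 ∧ (d : ℝ) ≥ 2 * Real.sqrt n - 1 := by
  have : NeZero n := ⟨hn.ne'⟩
  have hcov' (k : ZMod n) : .sr k ∈ S ∨ ∃ x ∈ S, ∃ y ∈ S, .sr k = x * y :=
    (hcov (.sr k)).resolve_left (by rintro ⟨⟩)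
  obtain ⟨a, b, hn_le, rfl⟩ : ∃ a b : ℕ, n ≤ a * (b + 1) ∧ d = b + a :=
    ⟨_, _, DihedralGroup.le_card_reflectionIndices_mul hinv hcov',
      hd.trans (DihedralGroup.card_rotationIndices_add_card_reflectionIndices S).symm⟩
  have hn_le' : (n : ℝ) ≤ a * (b + 1) := by exact_mod_cast hn_le
  push_cast
  constructor
  · linarith [four_mul_le_sq_add (a : ℝ) (b + 1)]
  · have := two_mul_le_add_of_sq_le_mul (a := (a : ℝ)) (b := b + 1) (by positivity)
      (by positivity) ((Real.sq_sqrt n.cast_nonneg).trans_le hn_le')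
    linarith

/-- **Upper bound for dihedral groups.** Let `G` be the dihedral group of order `2n`
(`n ≥ 1`) and let `S ⊆ G` be inverse-closed, avoid the identity, and be such that every
element of `G` is a product of at most two elements of `S` (so `Cay(G,S)` has diameter at
most 2 and degree `d = |S|`). Then `2n ≤ (d+1)²/2`, i.e. `d ≥ 2√n - 1`. -/
theorem dihedral_diameter_two_upper_bound (n : ℕ) (hn : 0 < n)
    (S : Finset (DihedralGroup n))
    (h1 : (1 : DihedralGroup n) ∉ S)
    (hinv : ∀ s ∈ S, s⁻¹ ∈ S)
    (hcov : ∀ g : DihedralGroup n, g = 1 ∨ g ∈ S ∨ ∃ a ∈ S, ∃ b ∈ S, g = a * b)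
    (d : ℕ) (hd : d = S.card) :
    (2 * n : ℝ) ≤ ((d : ℝ) + 1) ^ 2 / 2 ∧ (d : ℝ) ≥ 2 * Real.sqrt n - 1 :=
  dihedral_diameter_two_upper_bound_general n hn S hinv hcov d hd
end

section
/- Assume the prime gap result: there exists x₀ such that for all real x ≥ x₀ there is a prime p with x − x^{0.525} ≤ p ≤ x. Then there exists d₀ such that for every integer d ≥ d₀ there exist a positive integer n with 2n ≥ d²/2 − 1.39·d^{1.525} and a subset S of the dihedral group G of order 2n with 1 ∉ S, S = S⁻¹, |S| = d, and every element of G a product of at most two elements of S. In particular DC(d,2) ≥ d²/2 − 1.39·d^{1.525} for all sufficiently large d. -/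
/-!
Take a prime `q` close to `d / 2` and `n = q² - 1`, so that the cyclic group `𝔽_{q²}ˣ` is
`ZMod n`. Fix `ω ∉ 𝔽_q`. Every element of `𝔽_{q²}ˣ` is an `𝔽_qˣ`-multiple of an element of
`A = {1} ∪ (ω + 𝔽_q)` (a copy of the projective line over `𝔽_q`), and every element outside `𝔽_q`
is a quotient of two elements of `ω + 𝔽_q`. Hence the `q + 1` reflections indexed by `A` and the
`q - 2` rotations indexed by `C = 𝔽_qˣ \ {1}` reach every element of `D_n` in at most two steps;
extra reflections bring the generating set to size `d`. The prime gap
`q ≥ d/2 - (d/2)^0.525` then gives `2n ≥ d²/2 - 2^0.475 · d^1.525`.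
-/

open DihedralGroup Module

/-- For `G = Multiplicative (ZMod n)`: the reflections `sr a` (`a ∈ A`) and rotations `r c`
(`c ∈ C`) form an inverse-closed generating set of `DihedralGroup n` of diameter two. -/
structure IsDiameterTwoPair {G : Type*} [CommGroup G] (A C : Finset G) : Prop where
  one_notMem : 1 ∉ C
  inv_mem : ∀ c ∈ C, c⁻¹ ∈ C
  div_cover : ∀ z, z ≠ 1 → z ∈ C ∨ ∃ a ∈ A, ∃ b ∈ A, z = a / b
  mul_cover : ∀ z, z ∈ A ∨ ∃ a ∈ A, ∃ c ∈ C, z = a * c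

namespace IsDiameterTwoPair

variable {G H : Type*} [CommGroup G] [CommGroup H] {A A' C : Finset G}

theorem mono_left (h : IsDiameterTwoPair A C) (hA : A ⊆ A') : IsDiameterTwoPair A' C where
  one_notMem := h.one_notMem
  inv_mem := h.inv_mem
  div_cover z hz :=
    (h.div_cover z hz).imp_right fun ⟨a, ha, b, hb, hab⟩ => ⟨a, hA ha, b, hA hb, hab⟩
  mul_cover z := (h.mul_cover z).imp (@hA z) fun ⟨a, ha, c, hc, hac⟩ => ⟨a, hA ha, c, hc, hac⟩

theorem map (h : IsDiameterTwoPair A C) (e : G ≃* H) :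
    IsDiameterTwoPair (A.map e.toEquiv.toEmbedding) (C.map e.toEquiv.toEmbedding) where
  one_notMem := by simpa [Finset.mem_map_equiv] using h.one_notMem
  inv_mem c hc := by
    simpa [Finset.mem_map_equiv] using h.inv_mem _ (Finset.mem_map_equiv.1 hc)
  div_cover z hz := by
    rcases h.div_cover (e.symm z) (by simpa using hz) with hc | ⟨a, ha, b, hb, hab⟩
    · exact .inl (Finset.mem_map_equiv.2 hc)
    · exact .inr ⟨e a, Finset.mem_map_of_mem _ ha, e b, Finset.mem_map_of_mem _ hb, by
        rw [← map_div, ← hab, e.apply_symm_apply]⟩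
  mul_cover z := by
    rcases h.mul_cover (e.symm z) with ha | ⟨a, ha, c, hc, hac⟩
    · exact .inl (Finset.mem_map_equiv.2 ha)
    · exact .inr ⟨e a, Finset.mem_map_of_mem _ ha, e c, Finset.mem_map_of_mem _ hc, by
        rw [← map_mul, ← hac, e.apply_symm_apply]⟩

open Finset in
theorem exists_dihedral_card_eq {n : ℕ} {A C : Finset (Multiplicative (ZMod n))}
    (h : IsDiameterTwoPair A C) :
    ∃ S : Finset (DihedralGroup n), (1 : DihedralGroup n) ∉ S ∧ (∀ s ∈ S, s⁻¹ ∈ S) ∧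
      S.card = A.card + C.card ∧
      ∀ g : DihedralGroup n, g = 1 ∨ g ∈ S ∨ ∃ a ∈ S, ∃ b ∈ S, g = a * b := by
  classical
  set S := A.image (sr ∘ Multiplicative.toAdd) ∪ C.image (r ∘ Multiplicative.toAdd)
  have hsr : ∀ a ∈ A, sr a.toAdd ∈ S := fun a ha => mem_union_left _ (mem_image_of_mem _ ha)
  have hr : ∀ c ∈ C, r c.toAdd ∈ S := fun c hc => mem_union_right _ (mem_image_of_mem _ hc)
  refine ⟨S, ?_, ?_, ?_, ?_⟩
  · simp only [S, mem_union, mem_image, Function.comp_apply, one_def, not_or, not_exists,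
      not_and]
    exact ⟨fun a _ ha => (nomatch ha),
      fun c hc hc1 => h.one_notMem (toAdd_eq_zero.1 (r.inj hc1) ▸ hc)⟩
  · simp only [S, mem_union, mem_image, Function.comp_apply]
    rintro _ (⟨a, ha, rfl⟩ | ⟨c, hc, rfl⟩)
    · exact .inl ⟨a, ha, (inv_sr _).symm⟩
    · exact .inr ⟨c⁻¹, h.inv_mem c hc, (inv_r _).symm⟩
  · rw [card_union_of_disjoint, card_image_of_injective, card_image_of_injective]
    · intro x y hxy; simpa using hxy
    · intro x y hxy; simpa using hxy
    · simp [disjoint_left]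
  · rintro (i | i)
    · by_cases hi : i = 0
      · simp [hi]
      rcases h.div_cover (.ofAdd i) (by simpa using hi) with hc | ⟨a, ha, b, hb, hab⟩
      · exact .inr (.inl (hr _ hc))
      · exact .inr (.inr ⟨_, hsr b hb, _, hsr a ha, by simp [sr_mul_sr, ← toAdd_div, ← hab]⟩)
    · rcases h.mul_cover (.ofAdd i) with ha | ⟨a, ha, c, hc, hac⟩
      · exact .inr (.inl (hsr _ ha))
      · exact .inr (.inr ⟨_, hsr a ha, _, hr c hc, by simp [sr_mul_r, ← toAdd_mul, ← hac]⟩)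

theorem exists_dihedral {n : ℕ} [NeZero n]
    {A C : Finset (Multiplicative (ZMod n))} (h : IsDiameterTwoPair A C) {d : ℕ}
    (hd : A.card + C.card ≤ d) (hdn : d ≤ n + C.card) :
    ∃ S : Finset (DihedralGroup n), (1 : DihedralGroup n) ∉ S ∧ (∀ s ∈ S, s⁻¹ ∈ S) ∧
      S.card = d ∧ ∀ g : DihedralGroup n, g = 1 ∨ g ∈ S ∨ ∃ a ∈ S, ∃ b ∈ S, g = a * b := by
  classical
  obtain ⟨A', hAA', -, hA'⟩ := Finset.exists_subsuperset_card_eq (Finset.subset_univ A)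
    (n := d - C.card) (by omega) (by simp [ZMod.card]; omega)
  obtain ⟨S, h1, hinv, hcard, hcover⟩ := (h.mono_left hAA').exists_dihedral_card_eq
  exact ⟨S, h1, hinv, by omega, hcover⟩

end IsDiameterTwoPair

section QuadraticExtension

variable {K L : Type*} [Field K] [Field L] [Algebra K L]

theorem exists_notMem_range_algebraMap (h : finrank K L = 2) :
    ∃ ω : L, ω ∉ Set.range (algebraMap K L) := by
  by_contra! hall
  have : (⊥ : Subalgebra K L) = ⊤ := eq_top_iff.2 fun z _ => Algebra.mem_bot.2 (hall z)
  have := Subalgebra.bot_eq_top_iff_finrank_eq_one.1 this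
  omega

variable {ω : L} (hω : ω ∉ Set.range (algebraMap K L))
include hω

theorem add_algebraMap_ne_zero (y : K) : ω + algebraMap K L y ≠ 0 := fun h =>
  hω ⟨-y, by rw [map_neg, neg_eq_of_add_eq_zero_left h]⟩

theorem exists_eq_algebraMap_add_algebraMap_mul (h : finrank K L = 2) (z : L) :
    ∃ a b : K, z = algebraMap K L a + algebraMap K L b * ω := by
  have hli : LinearIndependent K ![1, ω] := by
    refine LinearIndependent.pair_iff.2 fun s t hst => ?_
    obtain rfl | ht := eq_or_ne t 0
    · simpa using hst
    refine absurd ⟨-s / t, ?_⟩ hω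
    rw [Algebra.smul_def, Algebra.smul_def, mul_one] at hst
    rw [map_div₀, map_neg, div_eq_iff (by simpa using ht)]
    linear_combination -hst
  have hz : z ∈ Submodule.span K (Set.range ![1, ω]) := by
    rw [hli.span_eq_top_of_card_eq_finrank (by simp [h])]
    exact Submodule.mem_top
  rw [Matrix.range_cons_cons_empty, Submodule.mem_span_pair] at hz
  obtain ⟨a, b, rfl⟩ := hz
  exact ⟨a, b, by rw [Algebra.smul_def, Algebra.smul_def, mul_one]⟩

theorem exists_eq_algebraMap_mul_add_algebraMap (h : finrank K L = 2) {z : L}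
    (hz : z ∉ Set.range (algebraMap K L)) :
    ∃ c y : K, c ≠ 0 ∧ z = algebraMap K L c * (ω + algebraMap K L y) := by
  obtain ⟨a, b, rfl⟩ := exists_eq_algebraMap_add_algebraMap_mul hω h z
  have hb : b ≠ 0 := by
    rintro rfl
    exact hz ⟨a, by simp⟩
  refine ⟨b, a / b, hb, ?_⟩
  rw [mul_add, ← map_mul, mul_div_cancel₀ _ hb, add_comm]

theorem exists_mul_add_algebraMap_eq (h : finrank K L = 2) {u : L}
    (hu : u ∉ Set.range (algebraMap K L)) :
    ∃ x y : K, u * (ω + algebraMap K L y) = ω + algebraMap K L x := by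
  obtain ⟨s, t, rfl⟩ := exists_eq_algebraMap_add_algebraMap_mul hω h u
  obtain ⟨α, β, hω2⟩ := exists_eq_algebraMap_add_algebraMap_mul hω h (ω * ω)
  have ht : t ≠ 0 := by
    rintro rfl
    exact hu ⟨s, by simp⟩
  -- with `u = s + tω` and `ω² = α + βω`, this `y` makes the `ω`-coordinate of `u (ω + y)` one
  set y := (1 - s - t * β) / t
  have hty : algebraMap K L t * algebraMap K L y =
      1 - algebraMap K L s - algebraMap K L t * algebraMap K L β := by
    rw [← map_mul, mul_div_cancel₀ _ ht]
    simp
  refine ⟨t * α + s * y, y, ?_⟩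
  simp only [map_add, map_mul]
  linear_combination algebraMap K L t * hω2 + ω * hty

end QuadraticExtension

open Finset in
theorem exists_isDiameterTwoPair_units {K L : Type*} [Field K] [Fintype K] [Field L]
    [Algebra K L] (h : finrank K L = 2) :
    ∃ A C : Finset Lˣ, IsDiameterTwoPair A C ∧
      A.card ≤ Fintype.card K + 1 ∧ C.card ≤ Fintype.card K - 2 := by
  classical
  obtain ⟨ω, hω⟩ := exists_notMem_range_algebraMap h
  let f : K → Lˣ := fun y => Units.mk0 _ (add_algebraMap_ne_zero hω y)
  let ι : Kˣ →* Lˣ := Units.map (algebraMap K L : K →* L)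
  have hfA : ∀ y, f y ∈ insert 1 (univ.image f) := fun y =>
    mem_insert_of_mem (mem_image_of_mem _ (mem_univ y))
  have hιC : ∀ k, ι k ≠ 1 → ι k ∈ (univ.image ι).erase 1 := fun k hk =>
    mem_erase.2 ⟨hk, mem_image_of_mem _ (mem_univ k)⟩
  have hrange : ∀ u : Lˣ, (u : L) ∈ Set.range (algebraMap K L) → ∃ k, ι k = u := by
    rintro u ⟨k, hk⟩
    have hk0 : k ≠ 0 := by
      rintro rfl
      exact u.ne_zero (by simpa using hk.symm)
    exact ⟨Units.mk0 k hk0, Units.ext hk⟩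
  refine ⟨insert 1 (univ.image f), (univ.image ι).erase 1, ⟨?_, ?_, ?_, ?_⟩, ?_, ?_⟩
  · exact notMem_erase _ _
  · simp only [mem_erase, mem_image, mem_univ, true_and]
    rintro _ ⟨hc1, k, rfl⟩
    exact ⟨inv_ne_one.2 hc1, k⁻¹, map_inv _ _⟩
  · intro u hu
    by_cases hK : (u : L) ∈ Set.range (algebraMap K L)
    · obtain ⟨k, rfl⟩ := hrange u hK
      exact .inl (hιC k hu)
    · obtain ⟨x, y, hxy⟩ := exists_mul_add_algebraMap_eq hω h hK
      exact .inr ⟨f x, hfA x, f y, hfA y, eq_div_iff_mul_eq'.2 (Units.ext hxy)⟩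
  · intro u
    by_cases hK : (u : L) ∈ Set.range (algebraMap K L)
    · obtain ⟨k, rfl⟩ := hrange u hK
      by_cases hk : ι k = 1
      · exact .inl (hk ▸ mem_insert_self _ _)
      · exact .inr ⟨1, mem_insert_self _ _, ι k, hιC k hk, (one_mul _).symm⟩
    · obtain ⟨c, y, hc, hcy⟩ := exists_eq_algebraMap_mul_add_algebraMap hω h hK
      by_cases hc1 : c = 1
      · subst hc1
        have hu : u = f y := Units.ext (by simpa [f] using hcy)
        exact .inl (hu ▸ hfA y)
      · refine .inr ⟨f y, hfA y, ι (Units.mk0 c hc), hιC _ ?_, Units.ext ?_⟩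
        · simpa [ι, Units.ext_iff] using hc1
        · simp [ι, f, hcy, mul_comm]
  · calc (insert 1 (univ.image f)).card ≤ (univ.image f).card + 1 := card_insert_le _ _
      _ ≤ Fintype.card K + 1 := Nat.add_le_add_right card_image_le 1
  · calc ((univ.image ι).erase 1).card = (univ.image ι).card - 1 :=
          card_erase_of_mem (mem_image.2 ⟨1, mem_univ _, map_one ι⟩)
      _ ≤ Fintype.card Kˣ - 1 := Nat.sub_le_sub_right card_image_le 1
      _ = Fintype.card K - 2 := by rw [Fintype.card_units]; omega

theorem exists_isDiameterTwoPair_zmod (q : ℕ) [Fact q.Prime] :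
    ∃ A C : Finset (Multiplicative (ZMod (q ^ 2 - 1))), IsDiameterTwoPair A C ∧
      A.card ≤ q + 1 ∧ C.card ≤ q - 2 := by
  let L := GaloisField q 2
  have hcard : Nat.card Lˣ = Nat.card (Multiplicative (ZMod (q ^ 2 - 1))) := by
    rw [Nat.card_units, GaloisField.card q 2 two_ne_zero, Nat.card_congr Multiplicative.toAdd,
      Nat.card_zmod]
  obtain ⟨A, C, h, hA, hC⟩ := exists_isDiameterTwoPair_units (K := ZMod q) (L := L)
    (GaloisField.finrank q two_ne_zero)
  rw [ZMod.card] at hA hC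
  exact ⟨_, _, h.map (mulEquivOfCyclicCardEq hcard), by simpa using hA, by simpa using hC⟩

theorem exists_dihedral_of_prime {q d : ℕ} (hq : q.Prime) (hqd : 2 * q ≤ d + 1)
    (hdq : d ≤ q ^ 2 - 1) :
    ∃ S : Finset (DihedralGroup (q ^ 2 - 1)), (1 : DihedralGroup (q ^ 2 - 1)) ∉ S ∧
      (∀ s ∈ S, s⁻¹ ∈ S) ∧ S.card = d ∧
      ∀ g : DihedralGroup (q ^ 2 - 1), g = 1 ∨ g ∈ S ∨ ∃ a ∈ S, ∃ b ∈ S, g = a * b := by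
  have : Fact q.Prime := ⟨hq⟩
  have hq2 : 4 ≤ q ^ 2 := by nlinarith [hq.two_le]
  have : NeZero (q ^ 2 - 1) := ⟨by omega⟩
  obtain ⟨A, C, h, hA, hC⟩ := exists_isDiameterTwoPair_zmod q
  exact h.exists_dihedral (by have := hq.two_le; omega) (by omega)

theorem rpow_le_half_of_sixteen_le {x : ℝ} (hx : 16 ≤ x) : x ^ (0.525 : ℝ) ≤ x / 2 := by
  have h2 : (2 : ℝ) ≤ x ^ (0.475 : ℝ) :=
    calc (2 : ℝ) = ((2 : ℝ) ^ (4 : ℕ)) ^ (1 / 4 : ℝ) := by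
          rw [← Real.rpow_natCast, ← Real.rpow_mul (by norm_num)]; norm_num
      _ ≤ x ^ (1 / 4 : ℝ) := Real.rpow_le_rpow (by norm_num) (by linarith) (by norm_num)
      _ ≤ x ^ (0.475 : ℝ) := Real.rpow_le_rpow_of_exponent_le (by linarith) (by norm_num)
  have hsplit : x ^ (0.525 : ℝ) * x ^ (0.475 : ℝ) = x := by
    rw [← Real.rpow_add (by linarith)]; norm_num
  nlinarith [Real.rpow_nonneg (by linarith : (0 : ℝ) ≤ x) (0.525 : ℝ)]

theorem two_rpow_le_1_39 : (2 : ℝ) ^ (0.475 : ℝ) ≤ 1.39 := by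
  have h40 : ((2 : ℝ) ^ (0.475 : ℝ)) ^ (40 : ℕ) = 2 ^ (19 : ℕ) := by
    rw [← Real.rpow_natCast, ← Real.rpow_mul (by norm_num)]
    norm_num
  exact le_of_pow_le_pow_left₀ (by norm_num) (by norm_num) (n := 40) (by rw [h40]; norm_num)

theorem prime_gap_estimate {d q : ℝ} (hd : 32 ≤ d) (hq : d / 2 - (d / 2) ^ (0.525 : ℝ) ≤ q) :
    d / 4 ≤ q ∧ d ^ 2 / 2 - 1.39 * d ^ (1.525 : ℝ) ≤ 2 * (q ^ 2 - 1) := by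
  have hX1 : 1 ≤ (d / 2) ^ (0.525 : ℝ) := Real.one_le_rpow (by linarith) (by norm_num)
  have hXd : (d / 2) ^ (0.525 : ℝ) ≤ d / 4 := by
    linarith [rpow_le_half_of_sixteen_le (x := d / 2) (by linarith)]
  have hdX : 2 * d * (d / 2) ^ (0.525 : ℝ) = (2 : ℝ) ^ (0.475 : ℝ) * d ^ (1.525 : ℝ) := by
    rw [Real.div_rpow (by linarith) (by norm_num), show (0.475 : ℝ) = 1 - 0.525 by norm_num,
      show (1.525 : ℝ) = 1 + 0.525 by norm_num, Real.rpow_sub two_pos,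
      Real.rpow_add (by linarith), Real.rpow_one, Real.rpow_one]
    field_simp
  have hdX' : 2 * d * (d / 2) ^ (0.525 : ℝ) ≤ 1.39 * d ^ (1.525 : ℝ) := by
    rw [hdX]
    exact mul_le_mul_of_nonneg_right two_rpow_le_1_39 (by positivity)
  refine ⟨by linarith, ?_⟩
  nlinarith [pow_le_pow_left₀ (by linarith : 0 ≤ d / 2 - (d / 2) ^ (0.525 : ℝ)) hq 2]

/-- **Theorem (asymptotic lower bound).** Assume the Baker–Harman–Pintz prime gap result:
there is `x₀` such that every real `x ≥ x₀` has a prime in `[x - x^0.525, x]`. Then for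
all sufficiently large `d` there is a dihedral group of order `2n ≥ d²/2 - 1.39·d^1.525`
admitting an inverse-closed, identity-free subset `S` of size exactly `d` such that every
group element is a product of at most two elements of `S`; in particular
`DC(d,2) ≥ d²/2 - 1.39·d^1.525` for all sufficiently large `d`. -/
theorem dihedral_diameter_two_asymptotic_lower_bound
    (primegap : ∃ x₀ : ℝ, ∀ x : ℝ, x₀ ≤ x →
      ∃ p : ℕ, p.Prime ∧ x - x ^ (0.525 : ℝ) ≤ (p : ℝ) ∧ (p : ℝ) ≤ x) :
    ∃ d₀ : ℕ, ∀ d : ℕ, d₀ ≤ d →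
      ∃ n : ℕ, 0 < n ∧
        ((d : ℝ) ^ 2 / 2 - 1.39 * (d : ℝ) ^ (1.525 : ℝ) ≤ (2 * n : ℝ)) ∧
        ∃ S : Finset (DihedralGroup n),
          (1 : DihedralGroup n) ∉ S ∧
          (∀ s ∈ S, s⁻¹ ∈ S) ∧
          S.card = d ∧
          (∀ g : DihedralGroup n, g = 1 ∨ g ∈ S ∨ ∃ a ∈ S, ∃ b ∈ S, g = a * b) := by
  obtain ⟨x₀, hgap⟩ := primegap
  refine ⟨max 32 ⌈2 * x₀⌉₊, fun d hd => ?_⟩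
  have hd32 : (32 : ℝ) ≤ d := by exact_mod_cast (le_max_left _ _).trans hd
  have hx₀ : x₀ ≤ d / 2 := by
    have : ⌈2 * x₀⌉₊ ≤ d := (le_max_right _ _).trans hd
    linarith [Nat.ceil_le.1 this]
  obtain ⟨q, hq, hql, hqu⟩ := hgap (d / 2) hx₀
  obtain ⟨hq4, hbound⟩ := prime_gap_estimate hd32 hql
  have hq8 : 8 ≤ q := by exact_mod_cast (by linarith : (8 : ℝ) ≤ q)
  have hd4q : d ≤ 4 * q := by exact_mod_cast (by linarith : (d : ℝ) ≤ 4 * q)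
  have h2q : 2 * q ≤ d := by exact_mod_cast (by linarith : (2 * q : ℝ) ≤ d)
  have hq2 : 4 * q < q ^ 2 := by nlinarith
  refine ⟨q ^ 2 - 1, by omega, ?_, exists_dihedral_of_prime hq (by omega) (by omega)⟩
  rw [Nat.cast_sub (by omega)]
  push_cast
  linarith
end

section
/- Let n be a positive integer, let H be a finite group in which every element has order dividing 2 (an elementary abelian 2-group), and let G be the direct product of the dihedral group of order 2n with H. Suppose S ⊆ G satisfies 1 ∉ S, S = S⁻¹, and every element of G is a product of at most two elements of S, with d = |S|. Then |G| ≤ (d + 1)²/2. -/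
/-!
Let `K` be the subgroup of index two of `D_{2n} × H` whose first coordinates are rotations; every
element outside `K` is an involution. Split `S` into `X = S ∩ K` and `Y = S \ K`. An element
`g ∉ K` is `1 * y`, `x * y`, or `y * x` with `x ∈ X`, `y ∈ Y`, and in the last case
`g = g⁻¹ = x⁻¹ * y` with `x⁻¹ ∈ X`. So the coset `G \ K`, of size `|G| / 2`, lies in
`({1} ∪ X) * Y`, and `|G| / 2 ≤ (|X| + 1) |Y| ≤ ((d + 1) / 2)²` by AM-GM.
-/

open Finset Pointwise

section IndexTwo

variable {G : Type*} [Group G] {K : Subgroup G}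

theorem mem_insert_one_mul_of_notMem_of_index_eq_two [DecidableEq G] [DecidablePred (· ∈ K)]
    (hK : K.index = 2) (hsq : ∀ g ∉ K, g ^ 2 = 1) {S : Finset G} (hinv : ∀ s ∈ S, s⁻¹ ∈ S)
    {g : G} (hg : g ∉ K) (hcov : g = 1 ∨ g ∈ S ∨ ∃ a ∈ S, ∃ b ∈ S, g = a * b) :
    g ∈ insert 1 (S.filter (· ∈ K)) * S.filter (· ∉ K) := by
  rcases hcov with rfl | hgS | ⟨a, ha, b, hb, rfl⟩
  · exact absurd K.one_mem hg
  · simpa using mul_mem_mul (mem_insert_self 1 _) (mem_filter.2 ⟨hgS, hg⟩)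
  · rw [Subgroup.mul_mem_iff_of_index_two hK] at hg
    by_cases haK : a ∈ K
    · exact mul_mem_mul (mem_insert_of_mem (mem_filter.2 ⟨ha, haK⟩))
        (mem_filter.2 ⟨hb, fun hbK => hg (iff_of_true haK hbK)⟩)
    · have hbK : b ∈ K := by tauto
      have inv_eq_self {x : G} (hx : x ∉ K) : x⁻¹ = x :=
        inv_eq_of_mul_eq_one_right (by rw [← sq, hsq x hx])
      have hab : a * b = b⁻¹ * a := by
        rw [← inv_eq_self (x := a * b) (by rwa [Subgroup.mul_mem_iff_of_index_two hK]),
          mul_inv_rev, inv_eq_self haK]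
      rw [hab]
      exact mul_mem_mul (mem_insert_of_mem (mem_filter.2 ⟨hinv b hb, K.inv_mem hbK⟩))
        (mem_filter.2 ⟨ha, haK⟩)

theorem nat_card_subgroup_le_of_index_eq_two [DecidablePred (· ∈ K)]
    (hK : K.index = 2) (hsq : ∀ g ∉ K, g ^ 2 = 1) {S : Finset G} (hinv : ∀ s ∈ S, s⁻¹ ∈ S)
    (hcov : ∀ g : G, g = 1 ∨ g ∈ S ∨ ∃ a ∈ S, ∃ b ∈ S, g = a * b) :
    Nat.card K ≤ ((S.filter (· ∈ K)).card + 1) * (S.filter (· ∉ K)).card := by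
  classical
  obtain ⟨a, haK⟩ : ∃ a, a ∉ K := by
    by_contra! h
    simp [(Subgroup.eq_top_iff' K).2 h] at hK
  have hmem (k : K) : a * k ∈ insert 1 (S.filter (· ∈ K)) * S.filter (· ∉ K) :=
    mem_insert_one_mul_of_notMem_of_index_eq_two hK hsq hinv
      (fun h => haK (by simpa using K.mul_mem h (K.inv_mem k.2))) (hcov _)
  calc Nat.card K
      ≤ Nat.card (insert 1 (S.filter (· ∈ K)) * S.filter (· ∉ K) : Finset G) :=
        Nat.card_le_card_of_injective (fun k => ⟨a * k, hmem k⟩)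
          fun k l hkl => Subtype.ext (mul_left_cancel (congrArg Subtype.val hkl))
    _ ≤ (insert 1 (S.filter (· ∈ K))).card * (S.filter (· ∉ K)).card := by
        rw [Nat.card_eq_finsetCard]; exact card_mul_le
    _ ≤ _ := by gcongr; exact card_insert_le _ _

theorem nat_card_le_of_index_eq_two (hK : K.index = 2) (hsq : ∀ g ∉ K, g ^ 2 = 1)
    (S : Finset G) (hinv : ∀ s ∈ S, s⁻¹ ∈ S)
    (hcov : ∀ g : G, g = 1 ∨ g ∈ S ∨ ∃ a ∈ S, ∃ b ∈ S, g = a * b) :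
    (Nat.card G : ℝ) ≤ ((S.card : ℝ) + 1) ^ 2 / 2 := by
  classical
  have hcardK := nat_card_subgroup_le_of_index_eq_two hK hsq hinv hcov
  rw [← K.card_mul_index, hK, ← S.card_filter_add_card_filter_not (· ∈ K)]
  set x := (S.filter (· ∈ K)).card
  set y := (S.filter (· ∉ K)).card
  have hcardK_real : (Nat.card K : ℝ) ≤ (x + 1) * y := by exact_mod_cast hcardK
  push_cast
  nlinarith [sq_nonneg ((x : ℝ) + 1 - y)]

end IndexTwo

namespace DihedralGroup

variable {n : ℕ}

def sign : DihedralGroup n →* ℤˣ where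
  toFun
    | r _ => 1
    | sr _ => -1
  map_one' := rfl
  map_mul' a b := by rcases a with i | i <;> rcases b with j | j <;> rfl

@[simp] theorem sign_r (i : ZMod n) : sign (r i) = 1 := rfl

theorem sign_surjective : Function.Surjective (sign : DihedralGroup n →* ℤˣ) := by
  intro u
  rcases Int.units_eq_one_or u with rfl | rfl
  exacts [⟨r 0, rfl⟩, ⟨sr 0, rfl⟩]

theorem index_ker_sign_comp_fst (H : Type*) [Group H] :
    (sign.comp (MonoidHom.fst (DihedralGroup n) H)).ker.index = 2 := by
  have hsurj : Function.Surjective (sign.comp (MonoidHom.fst (DihedralGroup n) H)) := fun u =>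
    let ⟨g, hg⟩ := sign_surjective u; ⟨(g, 1), hg⟩
  rw [Subgroup.index_ker, MonoidHom.range_eq_top_of_surjective _ hsurj, Subgroup.card_top,
    Nat.card_eq_fintype_card, Fintype.card_units_int]

end DihedralGroup

theorem dihedral_prod_elementary_abelian_order_bound_general
    (n : ℕ)
    (H : Type*) [Group H] (hH : ∀ h : H, h ^ 2 = 1)
    (S : Finset (DihedralGroup n × H))
    (hinv : ∀ s ∈ S, s⁻¹ ∈ S)
    (hcov : ∀ g : DihedralGroup n × H, g = 1 ∨ g ∈ S ∨ ∃ a ∈ S, ∃ b ∈ S, g = a * b)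
    (d : ℕ) (hd : d = S.card) :
    (Nat.card (DihedralGroup n × H) : ℝ) ≤ ((d : ℝ) + 1) ^ 2 / 2 := by
  subst hd
  refine nat_card_le_of_index_eq_two (DihedralGroup.index_ker_sign_comp_fst H) ?_ S hinv hcov
  rintro ⟨g | g, h⟩ hg
  · simp at hg
  · exact Prod.ext ((sq _).trans (DihedralGroup.sr_mul_self g)) (hH h)

/-- **Remark (extension to `D_{2n} × H` for elementary abelian 2-groups `H`).**
Let `G` be the direct product of the dihedral group of order `2n` (`n ≥ 1`) with a finite
group `H` in which every element has order dividing 2 (an elementary abelian 2-group).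
If `S ⊆ G` is inverse-closed, avoids the identity, and every element of `G` is a product
of at most two elements of `S` (so `Cay(G,S)` has diameter at most 2 and degree
`d = |S|`), then `|G| ≤ (d+1)²/2`. -/
theorem dihedral_prod_elementary_abelian_order_bound
    (n : ℕ) (hn : 0 < n)
    (H : Type*) [Group H] [Fintype H] (hH : ∀ h : H, h ^ 2 = 1)
    (S : Finset (DihedralGroup n × H))
    (h1 : (1 : DihedralGroup n × H) ∉ S)
    (hinv : ∀ s ∈ S, s⁻¹ ∈ S)
    (hcov : ∀ g : DihedralGroup n × H, g = 1 ∨ g ∈ S ∨ ∃ a ∈ S, ∃ b ∈ S, g = a * b)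
    (d : ℕ) (hd : d = S.card) :
    (Nat.card (DihedralGroup n × H) : ℝ) ≤ ((d : ℝ) + 1) ^ 2 / 2 :=
  dihedral_prod_elementary_abelian_order_bound_general n H hH S hinv hcov d hd
end

section
/- Let p be a prime, let G = (ℤ/pℤ × (ℤ/pℤ)ˣ) ⋊ C₂ be the semidirect product where the nontrivial element of C₂ acts by inversion, with multiplication (a,b,c)(α,β,γ) = (a + αc, bβ^c, cγ) for c, γ ∈ {±1}. Let v = (0,1,−1), a_x = (0,x,1) for x ∈ (ℤ/pℤ)ˣ \ {1}, and b_x = (x,x,−1) for x ∈ (ℤ/pℤ)ˣ (where in b_x the first coordinate is the image of x in ℤ/pℤ). Then every element of G of the form (x,y,−1) is a product of at most two elements of the set T = {v} ∪ {a_x} ∪ {b_x}, and every element of the form (x,y,1) with y ≠ 1 is a product of at most two elements of T. -/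
/-- The group `G = (ℤ/pℤ × (ℤ/pℤ)ˣ) ⋊ C₂`, with `C₂ = {±1}` acting by inversion;
its multiplication rule is `(a,b,c)(α,β,γ) = (a + αc, bβ^c, cγ)`. -/
abbrev GDih (p : ℕ) : Type :=
  (Multiplicative (ZMod p) × (ZMod p)ˣ) ⋊[invAut (Multiplicative (ZMod p) × (ZMod p)ˣ)] ℤˣ

/-- The generator `v = (0, 1, -1)`. -/
def v (p : ℕ) : GDih p := ⟨(Multiplicative.ofAdd (0 : ZMod p), 1), -1⟩

/-- The generators `a_x = (0, x, 1)` for `x ∈ (ℤ/pℤ)ˣ`. -/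
def a (p : ℕ) (x : (ZMod p)ˣ) : GDih p := ⟨(Multiplicative.ofAdd (0 : ZMod p), x), 1⟩

/-- The generators `b_x = (x, x, -1)` for `x ∈ (ℤ/pℤ)ˣ` (in the first coordinate `x`
denotes the image of the unit `x` in `ℤ/pℤ`). -/
def b (p : ℕ) (x : (ZMod p)ˣ) : GDih p :=
  ⟨(Multiplicative.ofAdd ((x : ZMod p)), x), -1⟩


open scoped Pointwise

theorem invAut_apply {H : Type*} [CommGroup H] (c : ℤˣ) (h : H) :
    invAut H c h = h ^ (c : ℤ) := by
  rcases Int.units_eq_one_or c with rfl | rfl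
  · simp [invAut]
  · simp [invAut, MulEquiv.inv]
    rfl

namespace GDih

variable {p : ℕ}

def mk (x : ZMod p) (y : (ZMod p)ˣ) (c : ℤˣ) : GDih p := ⟨(Multiplicative.ofAdd x, y), c⟩

theorem exists_eq_mk (g : GDih p) : ∃ x y c, g = mk x y c :=
  ⟨Multiplicative.toAdd g.left.1, g.left.2, g.right, rfl⟩

@[simp] theorem mk_right (x : ZMod p) (y : (ZMod p)ˣ) (c : ℤˣ) : (mk x y c).right = c := rfl

theorem mk_mul_mk (x₁ x₂ : ZMod p) (y₁ y₂ : (ZMod p)ˣ) (c₁ c₂ : ℤˣ) :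
    mk x₁ y₁ c₁ * mk x₂ y₂ c₂ = mk (x₁ + (c₁ : ℤ) • x₂) (y₁ * y₂ ^ (c₁ : ℤ)) (c₁ * c₂) := by
  ext <;> simp [mk, invAut_apply, ← ofAdd_zsmul, ← ofAdd_add]

theorem v_eq : v p = mk 0 1 (-1) := rfl

theorem a_eq (x : (ZMod p)ˣ) : a p x = mk 0 x 1 := rfl

theorem b_eq (x : (ZMod p)ˣ) : b p x = mk x x (-1) := rfl

theorem a_mul_v (y : (ZMod p)ˣ) : a p y * v p = mk 0 y (-1) := by
  simp [a_eq, v_eq, mk_mul_mk]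

theorem a_mul_b (t s : (ZMod p)ˣ) : a p t * b p s = mk s (t * s) (-1) := by
  simp [a_eq, b_eq, mk_mul_mk]

theorem b_mul_b (z t : (ZMod p)ˣ) : b p z * b p t =
    mk ((z : ZMod p) - (t : ZMod p)) (z * t⁻¹) 1 := by
  simp [b_eq, mk_mul_mk, sub_eq_add_neg]

def genSet (p : ℕ) : Set (GDih p) :=
  {v p} ∪ {g | ∃ x : (ZMod p)ˣ, x ≠ 1 ∧ g = a p x} ∪ {g | ∃ x : (ZMod p)ˣ, g = b p x}

theorem v_mem_genSet : v p ∈ genSet p := Or.inl (Or.inl rfl)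

theorem a_mem_genSet {x : (ZMod p)ˣ} (hx : x ≠ 1) : a p x ∈ genSet p :=
  Or.inl (Or.inr ⟨x, hx, rfl⟩)

theorem b_mem_genSet (x : (ZMod p)ˣ) : b p x ∈ genSet p := Or.inr ⟨x, rfl⟩

variable [Fact p.Prime]

theorem mk_neg_one_mem_union_mul (x : ZMod p) (y : (ZMod p)ˣ) :
    mk x y (-1) ∈ genSet p ∪ genSet p * genSet p := by
  rcases eq_or_ne x 0 with rfl | hx
  · rcases eq_or_ne y 1 with rfl | hy
    · exact Or.inl v_mem_genSet
    · exact Or.inr (a_mul_v y ▸ Set.mul_mem_mul (a_mem_genSet hy) v_mem_genSet)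
  · obtain ⟨s, rfl⟩ := hx.isUnit
    rcases eq_or_ne y s with rfl | hy
    · exact Or.inl (b_mem_genSet y)
    · have h := Set.mul_mem_mul (a_mem_genSet (mul_inv_eq_one.not.mpr hy)) (b_mem_genSet s)
      rw [a_mul_b, inv_mul_cancel_right] at h
      exact Or.inr h

theorem mk_one_mem_union_mul (x : ZMod p) {y : (ZMod p)ˣ} (hy : y ≠ 1) :
    mk x y 1 ∈ genSet p ∪ genSet p * genSet p := by
  rcases eq_or_ne x 0 with rfl | hx
  · exact Or.inl (a_mem_genSet hy)
  · have hy' : (y : ZMod p) - 1 ≠ 0 := sub_ne_zero.mpr (Units.val_eq_one.not.mpr hy)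
    -- `b_{yt} b_t = (yt - t, y, 1)`, so `t = x / (y - 1)` works
    obtain ⟨t, ht⟩ := (div_ne_zero hx hy').isUnit
    have hx_eq : ((y * t : (ZMod p)ˣ) : ZMod p) - (t : ZMod p) = x := by
      rw [Units.val_mul, ht]
      field_simp
    have h := Set.mul_mem_mul (b_mem_genSet (y * t)) (b_mem_genSet t)
    rw [b_mul_b, mul_inv_cancel_right, hx_eq] at h
    exact Or.inr h

end GDih

/-- **Coverage step of Lemma 1.** With `T = {v} ∪ {a_x : x ≠ 1} ∪ {b_x}`, every element
`(x, y, -1)` of `G`, and every element `(x, y, 1)` with `y ≠ 1`, is a product of at most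
two elements of `T`. -/
theorem coverage_of_generators (p : ℕ) (hp : p.Prime)
    (T : Set (GDih p))
    (hT : T = {v p} ∪ {g | ∃ x : (ZMod p)ˣ, x ≠ 1 ∧ g = a p x} ∪
      {g | ∃ x : (ZMod p)ˣ, g = b p x}) :
    ∀ g : GDih p, (g.right = -1 ∨ (g.right = 1 ∧ g.left.2 ≠ 1)) →
      g ∈ T ∨ ∃ s ∈ T, ∃ t ∈ T, g = s * t := by
  have := Fact.mk hp
  subst hT
  intro g hg
  obtain ⟨x, y, c, rfl⟩ := GDih.exists_eq_mk g
  have hmem : GDih.mk x y c ∈ GDih.genSet p ∪ GDih.genSet p * GDih.genSet p := by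
    rcases hg with hc | ⟨hc, hy⟩
    · rw [GDih.mk_right] at hc
      exact hc ▸ GDih.mk_neg_one_mem_union_mul x y
    · rw [GDih.mk_right] at hc
      exact hc ▸ GDih.mk_one_mem_union_mul x hy
  rcases hmem with h | ⟨s, hs, t, ht, hst⟩
  exacts [Or.inl h, Or.inr ⟨s, hs, t, ht, hst.symm⟩]
end
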